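/- Fix d > 1, and let f, g : ℝ → [0,1] be measurable non-increasing solutions of the un-truncated cavity equation. Then for every t ∈ ℝ, the quantity x^{-(d-1)} ∫_{-x}^{∞} (y + x)^{d-1} (f(y - t) - g(y)) dy converges, as x → +∞, to Δ(t) := ∫_ℝ (f(y - t) - g(y)) dy. -/

import Mathlib

/-!
Since `(y + x) ^ (d - 1) / x ^ (d - 1) = ((y + x) / x) ^ (d - 1)`, the quotient is
`∫ 1_{y > -x} ((y + x) / x) ^ (d - 1) h(y) dy` with `h(y) = f(y - t) - g(y)`, so dominated
convergence gives the limit once `(1 + |y|) ^ (d - 1) h` is integrable. That holds because a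
monotone solution is exponentially close to the step `1_{y ≤ 0}`: on `(-x, 0]` it is at least
`f 0 > 0`, so the equation gives `f x ≤ exp (-f 0 * x ^ d)` for `x ≥ 0`; feeding this back in,
with `1 - e^{-u} ≤ u`, gives `1 - f x ≤ exp (-f 0 * |x| ^ d) / f 0` for `x ≤ 0`. Shifting by `t`
changes the step only on `[-|t|, |t|]`.
-/

open MeasureTheory Set Filter

/-- The truncated cavity operator `T`. -/
noncomputable def T (d lam : ℝ) (f : ℝ → ℝ) : ℝ → ℝ :=
  fun x => Real.exp (-(d * ∫ y in (-x)..lam, (x + y) ^ (d - 1) * f y))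

/-- `f` is the fixed point of the truncated cavity operator on `[-λ, λ]`
(non-increasing and `[0,1]`-valued there), extended to `ℝ` by `1` on `(-∞, -λ]`
and `0` on `(λ, ∞)`. -/
def ExtFixedPoint (d lam : ℝ) (f : ℝ → ℝ) : Prop :=
  AntitoneOn f (Icc (-lam) lam) ∧
  (∀ x ∈ Icc (-lam) lam, f x ∈ Icc (0 : ℝ) 1) ∧
  (∀ x ≤ -lam, f x = 1) ∧ (∀ x > lam, f x = 0) ∧
  (∀ x ∈ Icc (-lam) lam, T d lam f x = f x)

/-- `f : ℝ → [0,1]` is a measurable solution of the un-truncated Mézard–Parisi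
cavity equation `f(x) = exp(-d ∫_{-x}^∞ (x+y)^{d-1} f(y) dy)`, the integrals
being (finite and) well-defined. -/
def SolvesCavity (d : ℝ) (f : ℝ → ℝ) : Prop :=
  Measurable f ∧ (∀ x : ℝ, f x ∈ Icc (0 : ℝ) 1) ∧
  (∀ x : ℝ, IntegrableOn (fun y => (x + y) ^ (d - 1) * f y) (Ioi (-x))) ∧
  (∀ x : ℝ, f x = Real.exp (-(d * ∫ y in Ioi (-x), (x + y) ^ (d - 1) * f y)))

open Real Topology

lemma exists_exp_neg_mul_rpow_le {c d a : ℝ} (hc : 0 < c) (hd : 1 < d) (ha : 0 ≤ a) :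
    ∃ M, ∀ y, 0 ≤ y → exp (-c * y ^ d) ≤ M * exp (-(a * y)) := by
  -- beyond `y₀`, `c * y ^ d = c * y ^ (d - 1) * y ≥ a * y`
  set y₀ := (a / c) ^ (d - 1)⁻¹
  refine ⟨exp (a * y₀), fun y hy => ?_⟩
  rw [← exp_add, exp_le_exp]
  rcases le_total y₀ y with hy₀ | hy₀
  · have hpow : a / c ≤ y ^ (d - 1) :=
      calc a / c = y₀ ^ (d - 1) := by
            rw [← rpow_mul (by positivity), inv_mul_cancel₀ (by linarith), rpow_one]
        _ ≤ y ^ (d - 1) := rpow_le_rpow (by positivity) hy₀ (by linarith)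
    have hsplit : y ^ d = y ^ (d - 1) * y := by
      rw [← rpow_add_one' hy (by linarith), sub_add_cancel]
    rw [div_le_iff₀ hc] at hpow
    nlinarith [mul_le_mul_of_nonneg_right hpow hy, mul_nonneg ha (by positivity : 0 ≤ y₀)]
  · nlinarith [mul_le_mul_of_nonneg_left hy₀ ha, mul_nonneg hc.le (rpow_nonneg hy d)]

lemma integral_Ioi_rpow_mul_exp_neg_mul_rpow {c d a : ℝ} (hc : 0 < c) (hd : 0 < d)
    (ha : 0 ≤ a) :
    ∫ y in Ioi a, y ^ (d - 1) * exp (-c * y ^ d) = exp (-c * a ^ d) / (c * d) := by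
  have hderiv : ∀ y ∈ Ioi a, HasDerivAt (fun y => -exp (-c * y ^ d) / (c * d))
      (y ^ (d - 1) * exp (-c * y ^ d)) y := by
    intro y hy
    exact ((((hasDerivAt_rpow_const (p := d) (Or.inl (ha.trans_lt hy).ne')).const_mul
      (-c)).exp.neg.div_const (c * d))).congr_deriv (by field_simp)
  have hlim : Tendsto (fun y => -exp (-c * y ^ d) / (c * d)) atTop (𝓝 (-0 / (c * d))) :=
    ((tendsto_exp_atBot.comp ((tendsto_rpow_atTop hd).const_mul_atTop_of_neg
      (neg_lt_zero.2 hc))).neg).div_const _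
  have hint : IntegrableOn (fun y => y ^ (d - 1) * exp (-c * y ^ d)) (Ioi a) :=
    (integrableOn_rpow_mul_exp_neg_mul_rpow (by linarith) hd hc).mono_set (Ioi_subset_Ioi ha)
  rw [integral_Ioi_of_hasDerivAt_of_tendsto ?_ hderiv hint hlim]
  · ring
  · exact (((continuousAt_rpow_const a d (Or.inr hd.le)).const_mul (-c)).rexp.neg.div_const
      _).continuousWithinAt

namespace SolvesCavity

variable {d : ℝ} {f : ℝ → ℝ}

lemma pos (hf : SolvesCavity d f) (x : ℝ) : 0 < f x := by
  rw [hf.2.2.2 x]; exact exp_pos _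

lemma le_exp_neg_mul_rpow (hd : 1 ≤ d) (hf : SolvesCavity d f) (hanti : Antitone f) {x : ℝ}
    (hx : 0 ≤ x) : f x ≤ exp (-f 0 * x ^ d) := by
  have hkernel_nonneg : ∀ y ∈ Ioi (-x), 0 ≤ (x + y) ^ (d - 1) :=
    fun y hy => rpow_nonneg (by linarith [mem_Ioi.1 hy]) _
  have hlow : f 0 * x ^ d / d ≤ ∫ y in Ioi (-x), (x + y) ^ (d - 1) * f y :=
    calc f 0 * x ^ d / d = ∫ y in Ioc (-x) 0, (x + y) ^ (d - 1) * f 0 := by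
          rw [← intervalIntegral.integral_of_le (by linarith),
            intervalIntegral.integral_mul_const,
            intervalIntegral.integral_comp_add_left (fun u => u ^ (d - 1)),
            integral_rpow (Or.inl (by linarith))]
          simp only [add_neg_cancel, add_zero, sub_add_cancel]
          rw [zero_rpow (by linarith)]
          ring
      _ ≤ ∫ y in Ioc (-x) 0, (x + y) ^ (d - 1) * f y := by
          refine setIntegral_mono_on ?_ ((hf.2.2.1 x).mono_set Ioc_subset_Ioi_self)
            measurableSet_Ioc fun y hy => ?_
          · exact (((continuous_const.add continuous_id).rpow_const fun _ => Or.inr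
              (by linarith)).mul continuous_const).integrableOn_Icc.mono_set Ioc_subset_Icc_self
          · exact mul_le_mul_of_nonneg_left (hanti hy.2) (hkernel_nonneg y hy.1)
      _ ≤ ∫ y in Ioi (-x), (x + y) ^ (d - 1) * f y :=
          setIntegral_mono_set (hf.2.2.1 x)
            ((ae_restrict_iff' measurableSet_Ioi).2 (ae_of_all _ fun y hy =>
              mul_nonneg (hkernel_nonneg y hy) (hf.2.1 y).1))
            Ioc_subset_Ioi_self.eventuallyLE
  rw [hf.2.2.2 x, exp_le_exp, neg_mul, neg_le_neg_iff]
  rwa [div_le_iff₀ (by linarith), mul_comm _ d] at hlow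

lemma one_sub_le_exp_neg_mul_rpow_div (hd : 1 ≤ d) (hf : SolvesCavity d f)
    (hanti : Antitone f) {x : ℝ} (hx : x ≤ 0) : 1 - f x ≤ exp (-f 0 * (-x) ^ d) / f 0 := by
  have hc := hf.pos 0
  set I := ∫ y in Ioi (-x), (x + y) ^ (d - 1) * f y
  have hI : I ≤ exp (-f 0 * (-x) ^ d) / (f 0 * d) := by
    rw [← integral_Ioi_rpow_mul_exp_neg_mul_rpow hc (by linarith) (by linarith)]
    refine setIntegral_mono_on (hf.2.2.1 x) ?_ measurableSet_Ioi fun y hy => ?_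
    · exact (integrableOn_rpow_mul_exp_neg_mul_rpow (by linarith) (by linarith) hc).mono_set
        (Ioi_subset_Ioi (by linarith))
    · have hxy : 0 ≤ x + y := by linarith [mem_Ioi.1 hy]
      exact mul_le_mul (rpow_le_rpow hxy (by linarith) (by linarith))
        (hf.le_exp_neg_mul_rpow hd hanti (by linarith)) (hf.2.1 y).1
        (rpow_nonneg (by linarith) _)
  have hexp := add_one_le_exp (-(d * I))
  rw [← hf.2.2.2 x] at hexp
  calc 1 - f x ≤ d * I := by linarith
    _ ≤ d * (exp (-f 0 * (-x) ^ d) / (f 0 * d)) := by gcongr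
    _ = exp (-f 0 * (-x) ^ d) / f 0 := by field_simp

lemma abs_sub_indicator_le (hd : 1 ≤ d) (hf : SolvesCavity d f) (hanti : Antitone f) (y : ℝ) :
    |f y - (Iic 0).indicator 1 y| ≤ exp (-f 0 * |y| ^ d) / f 0 := by
  have hc := hf.pos 0
  rcases le_or_gt y 0 with hy | hy
  · rw [indicator_of_mem (mem_Iic.2 hy), Pi.one_apply, abs_sub_comm,
      abs_of_nonneg (by linarith [(hf.2.1 y).2]), abs_of_nonpos hy]
    exact hf.one_sub_le_exp_neg_mul_rpow_div hd hanti hy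
  · rw [indicator_of_notMem (notMem_Iic.2 hy), sub_zero, abs_of_pos (hf.pos y),
      abs_of_pos hy]
    calc f y ≤ exp (-f 0 * y ^ d) := hf.le_exp_neg_mul_rpow hd hanti hy.le
      _ ≤ exp (-f 0 * y ^ d) / f 0 := le_div_self (exp_pos _).le hc (hf.2.1 0).2

lemma exists_abs_sub_indicator_le (hd : 1 < d) (hf : SolvesCavity d f) (hanti : Antitone f)
    {a : ℝ} (ha : 0 ≤ a) : ∃ M, ∀ y, |f y - (Iic 0).indicator 1 y| ≤ M * exp (-(a * |y|)) := by
  obtain ⟨M, hM⟩ := exists_exp_neg_mul_rpow_le (hf.pos 0) hd ha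
  refine ⟨M / f 0, fun y => (hf.abs_sub_indicator_le hd.le hanti y).trans ?_⟩
  rw [div_mul_eq_mul_div]
  exact div_le_div_of_nonneg_right (hM _ (abs_nonneg y)) (hf.pos 0).le

end SolvesCavity

lemma abs_indicator_Iic_sub_le {a : ℝ} (ha : 0 ≤ a) (t y : ℝ) :
    |(Iic 0).indicator 1 (y - t) - (Iic (0 : ℝ)).indicator 1 y| ≤
      exp (a * |t|) * exp (-(a * |y|)) := by
  have hcross : |y| ≤ |t| → 1 ≤ exp (a * |t|) * exp (-(a * |y|)) := fun h => by
    rw [← exp_add]; exact one_le_exp (by nlinarith)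
  simp only [indicator_apply, mem_Iic, Pi.one_apply]
  split_ifs <;> norm_num <;> first | positivity | apply hcross
  all_goals
    refine abs_le.2 ⟨?_, ?_⟩ <;> linarith [neg_abs_le t, le_abs_self t, abs_nonneg t]

lemma exp_neg_mul_abs_sub_le {a : ℝ} (ha : 0 ≤ a) (t y : ℝ) :
    exp (-(a * |y - t|)) ≤ exp (a * |t|) * exp (-(a * |y|)) := by
  rw [← exp_add, exp_le_exp]
  nlinarith [mul_le_mul_of_nonneg_left (abs_sub_abs_le_abs_sub y t) ha]

lemma abs_comp_sub_sub_le {f g : ℝ → ℝ} {a Mf Mg : ℝ} (ha : 0 ≤ a)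
    (hf : ∀ y, |f y - (Iic 0).indicator 1 y| ≤ Mf * exp (-(a * |y|)))
    (hg : ∀ y, |g y - (Iic 0).indicator 1 y| ≤ Mg * exp (-(a * |y|))) (t y : ℝ) :
    |f (y - t) - g y| ≤ ((Mf + 1) * exp (a * |t|) + Mg) * exp (-(a * |y|)) := by
  set s : ℝ → ℝ := (Iic 0).indicator 1
  have hMf : 0 ≤ Mf := nonneg_of_mul_nonneg_left ((abs_nonneg _).trans (hf 0)) (exp_pos _)
  calc |f (y - t) - g y|
      = |(f (y - t) - s (y - t)) + (s (y - t) - s y) - (g y - s y)| := by ring_nf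
    _ ≤ |f (y - t) - s (y - t)| + |s (y - t) - s y| + |g y - s y| :=
        (abs_sub _ _).trans (by gcongr; exact abs_add_le _ _)
    _ ≤ Mf * (exp (a * |t|) * exp (-(a * |y|))) + exp (a * |t|) * exp (-(a * |y|))
          + Mg * exp (-(a * |y|)) := by
        gcongr
        · exact (hf _).trans (mul_le_mul_of_nonneg_left (exp_neg_mul_abs_sub_le ha t y) hMf)
        · exact abs_indicator_Iic_sub_le ha t y
        · exact hg y
    _ = ((Mf + 1) * exp (a * |t|) + Mg) * exp (-(a * |y|)) := by ring

lemma integrable_exp_neg_abs : Integrable fun y : ℝ => exp (-|y|) := by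
  rw [← integrableOn_univ, ← Iic_union_Ioi (a := (0 : ℝ))]
  refine IntegrableOn.union
    ((integrableOn_exp_Iic 0).congr_fun (fun y hy => ?_) measurableSet_Iic)
    ((integrableOn_exp_neg_Ioi 0).congr_fun (fun y hy => ?_) measurableSet_Ioi)
  · rw [abs_of_nonpos hy, neg_neg]
  · rw [abs_of_pos hy]

lemma integrable_one_add_abs_rpow_mul {p a N : ℝ} {h : ℝ → ℝ} (hp : 0 ≤ p) (hpa : p + 1 ≤ a)
    (hh : AEStronglyMeasurable h) (hb : ∀ y, |h y| ≤ N * exp (-(a * |y|))) :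
    Integrable fun y => (1 + |y|) ^ p * h y := by
  have hN : 0 ≤ N := nonneg_of_mul_nonneg_left ((abs_nonneg _).trans (hb 0)) (exp_pos _)
  have hweight : Continuous fun y : ℝ => (1 + |y|) ^ p :=
    (continuous_const.add continuous_abs).rpow_const fun _ => Or.inr hp
  refine (integrable_exp_neg_abs.const_mul N).mono' (hweight.aestronglyMeasurable.mul hh)
    (ae_of_all _ fun y => ?_)
  have hpoly : (1 + |y|) ^ p ≤ exp (p * |y|) := by
    rw [mul_comm, exp_mul]
    exact rpow_le_rpow (by positivity) (by linarith [add_one_le_exp |y|]) hp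
  calc ‖(1 + |y|) ^ p * h y‖ = (1 + |y|) ^ p * |h y| := by
        rw [norm_mul, norm_of_nonneg (by positivity), norm_eq_abs]
    _ ≤ exp (p * |y|) * (N * exp (-(a * |y|))) := by gcongr; exact hb y
    _ = N * exp (p * |y| - a * |y|) := by rw [sub_eq_add_neg, exp_add]; ring
    _ ≤ N * exp (-|y|) := by gcongr; nlinarith [abs_nonneg y]

lemma add_div_le_one_add_abs {x : ℝ} (hx : 1 ≤ x) (y : ℝ) : (y + x) / x ≤ 1 + |y| := by
  rw [add_div, div_self (by linarith), add_comm]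
  gcongr
  exact (div_le_div_of_nonneg_right (le_abs_self y) (by linarith)).trans
    (div_le_self (abs_nonneg y) hx)

lemma tendsto_add_div_self_atTop (y : ℝ) : Tendsto (fun x => (y + x) / x) atTop (𝓝 1) := by
  have := (tendsto_const_nhds (x := y)).div_atTop tendsto_id |>.add_const 1
  rw [zero_add] at this
  refine this.congr' ?_
  filter_upwards [eventually_gt_atTop 0] with x hx
  rw [add_div, div_self hx.ne', id]

lemma tendsto_setIntegral_Ioi_add_rpow_mul_div_rpow {p : ℝ} (hp : 0 ≤ p) {h : ℝ → ℝ}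
    (hh : AEStronglyMeasurable h) (hint : Integrable fun y => (1 + |y|) ^ p * h y) :
    Tendsto (fun x => (∫ y in Ioi (-x), (y + x) ^ p * h y) / x ^ p) atTop (𝓝 (∫ y, h y)) := by
  set F : ℝ → ℝ → ℝ := fun x => (Ioi (-x)).indicator fun y => ((y + x) / x) ^ p * h y
  have hF : ∀ᶠ x in atTop, ∫ y, F x y = (∫ y in Ioi (-x), (y + x) ^ p * h y) / x ^ p := by
    filter_upwards [eventually_gt_atTop 0] with x hx
    rw [integral_indicator measurableSet_Ioi, ← integral_div]
    refine setIntegral_congr_fun measurableSet_Ioi fun y hy => ?_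
    rw [div_rpow (by linarith [mem_Ioi.1 hy]) hx.le]
    ring
  refine (tendsto_integral_filter_of_dominated_convergence (fun y => ‖(1 + |y|) ^ p * h y‖)
    ?_ ?_ hint.norm ?_).congr' hF
  · exact Eventually.of_forall fun x => (((continuous_id.add continuous_const).div_const x
      |>.rpow_const fun _ => Or.inr hp).aestronglyMeasurable.mul hh).indicator measurableSet_Ioi
  · filter_upwards [eventually_ge_atTop 1] with x hx
    refine ae_of_all _ fun y => ?_
    by_cases hy : y ∈ Ioi (-x)
    · have hyx : 0 ≤ (y + x) / x := div_nonneg (by linarith [mem_Ioi.1 hy]) (by linarith)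
      have hratio := add_div_le_one_add_abs hx y
      simp only [F, indicator_of_mem hy, norm_mul, norm_of_nonneg (rpow_nonneg hyx _),
        norm_of_nonneg (rpow_nonneg (by positivity : 0 ≤ 1 + |y|) _)]
      gcongr
    · simp only [F, indicator_of_notMem hy, norm_zero]
      positivity
  · refine ae_of_all _ fun y => ?_
    have hlim :=
      ((tendsto_add_div_self_atTop y).rpow_const (p := p) (Or.inl one_ne_zero)).mul_const (h y)
    rw [one_rpow, one_mul] at hlim
    refine hlim.congr' ?_
    filter_upwards [eventually_gt_atTop (-y)] with x hx
    simp only [F, indicator_of_mem (show y ∈ Ioi (-x) from mem_Ioi.2 (by linarith))]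

/-- for two non-increasing solutions `f, g` and every `t`,
`x^{-(d-1)} ∫_{-x}^∞ (y+x)^{d-1} (f(y-t) - g(y)) dy → Δ(t)` as `x → +∞`. -/
theorem cavity_shift_functional_limit (d : ℝ) (hd : 1 < d)
    (f g : ℝ → ℝ) (hf_anti : Antitone f) (hg_anti : Antitone g)
    (hf : SolvesCavity d f) (hg : SolvesCavity d g) :
    ∀ t : ℝ,
      Tendsto
        (fun x : ℝ =>
          (∫ y in Ioi (-x), (y + x) ^ (d - 1) * (f (y - t) - g y)) / x ^ (d - 1))
        atTop (nhds (∫ y : ℝ, (f (y - t) - g y))) := by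
  intro t
  have hd₀ : 0 ≤ d := by linarith
  obtain ⟨Mf, hMf⟩ := hf.exists_abs_sub_indicator_le hd hf_anti hd₀
  obtain ⟨Mg, hMg⟩ := hg.exists_abs_sub_indicator_le hd hg_anti hd₀
  have hmeas : AEStronglyMeasurable fun y => f (y - t) - g y :=
    ((hf.1.comp (measurable_sub_const t)).sub hg.1).aestronglyMeasurable
  exact tendsto_setIntegral_Ioi_add_rpow_mul_div_rpow (by linarith) hmeas
    (integrable_one_add_abs_rpow_mul (by linarith) (by linarith) hmeas
      (abs_comp_sub_sub_le hd₀ hMf hMg t))
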